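/- For every n ≥ 0, the identity (Z n).comp (X^2 + 4) = (−1)^{n−1} · (X^2 + 4) · (F n)^2 holds in ℤ[X]; equivalently, Z_n(x) = (−1)^{n−1}·x·F_n(√(x−4))^2 in the sense that substituting x = y^2 + 4 gives a polynomial identity in y. -/
import Mathlib


open Polynomial

/-- Fibonacci polynomials: `F 0 = 0`, `F 1 = 1`, `F n = X * F (n-1) + F (n-2)`. -/
noncomputable def FibPoly : ℕ → ℤ[X]
  | 0 => 0
  | 1 => 1
  | (n + 2) => X * FibPoly (n + 1) + FibPoly n

/-- Lucas-type polynomials: `l 0 = 2`, `l 1 = X`, `l n = X * l (n-1) - l (n-2)`. -/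
noncomputable def lucPoly : ℕ → ℤ[X]
  | 0 => 2
  | 1 => X
  | (n + 2) => X * lucPoly (n + 1) - lucPoly n

/-- Herbig's variant of the spread polynomials: `Z n = 2 - lₙ(2 - X)`. -/
noncomputable def Zpoly (n : ℕ) : ℤ[X] := 2 - (lucPoly n).comp (2 - X)

lemma fib_cassini (n : ℕ) :
    FibPoly (n+1)^2 - FibPoly n * FibPoly (n+2) = (-1)^n := by
  induction n with
  | zero => simp [FibPoly]
  | succ k ih =>
    rw [show FibPoly (k+3) = X * FibPoly (k+2) + FibPoly (k+1) from rfl,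
        show FibPoly (k+2) = X * FibPoly (k+1) + FibPoly k from rfl] at *
    linear_combination -ih

lemma zkey (n : ℕ) : (Zpoly (n+2)).comp (X^2+4) =
    -(X^2+2) * (Zpoly (n+1)).comp (X^2+4) - (Zpoly n).comp (X^2+4) + 2*(X^2+4) := by
  simp only [Zpoly, show lucPoly (n+2) = X * lucPoly (n+1) - lucPoly n from rfl,
    sub_comp, mul_comp, X_comp, add_comp, ofNat_comp]
  ring

lemma zaux (n : ℕ) :
    (Zpoly n).comp (X^2+4) = -(-1)^n * (X^2+4) * FibPoly n ^ 2 ∧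
    (Zpoly (n+1)).comp (X^2+4) = -(-1)^(n+1) * (X^2+4) * FibPoly (n+1) ^ 2 := by
  induction n with
  | zero =>
    constructor
    · simp [Zpoly, lucPoly, FibPoly]
    · simp [Zpoly, lucPoly, FibPoly, sub_comp, ofNat_comp]
  | succ k ih =>
    obtain ⟨ih1, ih2⟩ := ih
    refine ⟨ih2, ?_⟩
    have key := zkey k
    have cas := fib_cassini k
    have neg1 : ((-1:ℤ[X])^k) * ((-1:ℤ[X])^k) = 1 := by
      rw [← pow_add, ← two_mul, pow_mul]; simp
    have cas2 : ((-1:ℤ[X])^k) * (FibPoly (k+1)^2 - FibPoly k * FibPoly (k+2)) = 1 := by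
      rw [cas, neg1]
    rw [show FibPoly (k+2) = X * FibPoly (k+1) + FibPoly k from rfl] at *
    linear_combination key - (X^2+2) * ih2 - ih1 - 2*(X^2+4) * cas2

theorem Zpoly_comp_sq_add_four (n : ℕ) :
    (Zpoly n).comp (X ^ 2 + 4) = (-1) ^ (n - 1) * (X ^ 2 + 4) * (FibPoly n) ^ 2 := by
  cases n with
  | zero => simp [Zpoly, lucPoly, FibPoly]
  | succ k =>
    have h := (zaux (k+1)).1
    simpa [pow_succ] using h
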